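/- arXiv:0809.1842 — 4 statements merged into one kernel-verified Lean document; each statement's English description precedes it below -/
import Mathlib

section
/- For real numbers λ > 0 and q with |q| < λ, the function v_{λ,q}(x) = λ sech(λ|x| + arctanh(q/λ)) satisfies ∫_ℝ v_{λ,q}(x)² dx = 2(λ − q). -/
noncomputable def arctanh (x : ℝ) : ℝ := (1/2) * Real.log ((1+x)/(1-x))

/-!
On `[0, ∞)` the function `x ↦ (λ sech(λx + c))²` has antiderivative `λ tanh(λx + c)`, so its
integral there is `λ (1 - tanh c)`. With `c = arctanh (q/λ)` this is `λ - q`, and the integral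
over `ℝ` of the even function `v_{λ,q}²` is twice that.
-/

open Real MeasureTheory Set Filter Topology

theorem arctanh_eq_artanh {y : ℝ} (hy : y ∈ Icc (-1) 1) : arctanh y = artanh y :=
  (artanh_eq_half_log hy).symm

namespace Real

theorem hasDerivAt_tanh (x : ℝ) : HasDerivAt tanh (1 / cosh x ^ 2) x := by
  have hcosh : cosh x ≠ 0 := (cosh_pos x).ne'
  rw [show tanh = fun y ↦ sinh y / cosh y from funext tanh_eq_sinh_div_cosh]
  refine ((hasDerivAt_sinh x).div (hasDerivAt_cosh x) hcosh).congr_deriv ?_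
  rw [← cosh_sq_sub_sinh_sq x]
  ring

theorem one_sub_tanh (x : ℝ) : 1 - tanh x = 2 / (exp (2 * x) + 1) := by
  have hexp : exp (2 * x) = exp x * exp x := by rw [← exp_add, two_mul]
  rw [tanh_eq, exp_neg, hexp]
  field_simp
  ring

theorem tendsto_tanh_atTop : Tendsto tanh atTop (𝓝 1) := by
  have hdecay : Tendsto (fun x ↦ 2 / (exp (2 * x) + 1)) atTop (𝓝 0) :=
    tendsto_const_nhds.div_atTop <| tendsto_atTop_add_const_right _ _ <|
      tendsto_exp_atTop.comp (tendsto_id.const_mul_atTop two_pos)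
  have h := (tendsto_const_nhds (x := (1 : ℝ))).sub hdecay
  simp only [← one_sub_tanh, sub_sub_cancel, sub_zero] at h
  exact h

end Real

theorem integral_Ioi_sq_div_cosh_mul_add {a : ℝ} (ha : 0 < a) (c : ℝ) :
    ∫ x in Ioi (0 : ℝ), (a / cosh (a * x + c)) ^ 2 = a * (1 - tanh c) := by
  have hderiv : ∀ x ∈ Ici (0 : ℝ),
      HasDerivAt (fun x ↦ a * tanh (a * x + c)) ((a / cosh (a * x + c)) ^ 2) x := by
    intro x _
    have hinner : HasDerivAt (fun x ↦ a * x + c) a x := by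
      simpa using ((hasDerivAt_id x).const_mul a).add_const c
    exact (((hasDerivAt_tanh _).comp x hinner).const_mul a).congr_deriv (by ring)
  have hlim : Tendsto (fun x ↦ a * tanh (a * x + c)) atTop (𝓝 (a * 1)) :=
    (tendsto_tanh_atTop.comp <| tendsto_atTop_add_const_right _ c <|
      tendsto_id.const_mul_atTop ha).const_mul a
  rw [integral_Ioi_of_hasDerivAt_of_nonneg' hderiv (fun _ _ ↦ sq_nonneg _) hlim]
  simp only [mul_zero, zero_add]
  ring

/-- For `λ > 0` and `|q| < λ`, the ground state
`v_{λ,q}(x) = λ sech(λ|x| + arctanh(q/λ))` has mass `2(λ - q)`. -/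
theorem stmt0 (lam q : ℝ) (hlam : 0 < lam) (hq : |q| < lam) :
    ∫ x : ℝ, (lam / Real.cosh (lam * |x| + arctanh (q / lam)))^2 = 2 * (lam - q) := by
  have hratio : q / lam ∈ Ioo (-1) 1 := by
    rw [mem_Ioo, lt_div_iff₀ hlam, div_lt_one hlam]
    constructor <;> linarith [abs_lt.mp hq]
  have htanh : tanh (arctanh (q / lam)) = q / lam := by
    rw [arctanh_eq_artanh (Ioo_subset_Icc_self hratio), tanh_artanh hratio]
  rw [integral_comp_abs (f := fun x ↦ (lam / cosh (lam * x + arctanh (q / lam))) ^ 2),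
    integral_Ioi_sq_div_cosh_mul_add hlam, htanh]
  field_simp
end

section
/- Let H₀ be the 2×2 matrix differential operator H₀ = diag(−∂ₓ² + 1, ∂ₓ² − 1) + sech²(x) · [[−4, −2],[2, 4]]. Then for every real k, the vector-valued function Ψ₊(x,k) = [ (tanh x − ik)², −sech² x ]ᵀ e^{ikx} satisfies H₀ Ψ₊ = (k² + 1) Ψ₊. -/
/-!
Since `tanh' = 1 - tanh²` and `sech² = 1 - tanh²`, both components of `Ψ₊` have the form
`p(tanh x) e^{ikx}` with `p` a polynomial, and `∂ₓ` acts on such functions through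
`p ↦ p' (1 - X²) + ik p`. The eigenvalue equation thus becomes an identity between polynomials
in `tanh x`.
-/

open Complex Polynomial

lemma Real.one_div_cosh_sq (y : ℝ) : (1 / Real.cosh y) ^ 2 = 1 - Real.tanh y ^ 2 := by
  have hc := (Real.cosh_pos y).ne'
  rw [Real.tanh_eq_sinh_div_cosh]
  field_simp
  linear_combination -Real.cosh_sq_sub_sinh_sq y

lemma Real.hasDerivAt_tanh_s5 (y : ℝ) : HasDerivAt Real.tanh (1 - Real.tanh y ^ 2) y := by
  have hc := (Real.cosh_pos y).ne'
  have h := (Real.hasDerivAt_sinh y).fun_div (Real.hasDerivAt_cosh y) hc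
  rw [← funext Real.tanh_eq_sinh_div_cosh] at h
  rw [← Real.one_div_cosh_sq]
  refine h.congr_deriv ?_
  field_simp
  linear_combination Real.cosh_sq_sub_sinh_sq y

noncomputable def tanhExpDeriv (k : ℝ) (p : ℂ[X]) : ℂ[X] :=
  derivative p * (1 - X ^ 2) + C (I * k) * p

lemma hasDerivAt_eval_tanh_mul_exp (k : ℝ) (p : ℂ[X]) (y : ℝ) :
    HasDerivAt (fun y : ℝ => p.eval (Real.tanh y : ℂ) * cexp (I * k * y))
      ((tanhExpDeriv k p).eval (Real.tanh y : ℂ) * cexp (I * k * y)) y := by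
  have hp := (p.hasDerivAt (Real.tanh y : ℂ)).comp y (Real.hasDerivAt_tanh_s5 y).ofReal_comp
  have hE := ((hasDerivAt_id (y : ℂ)).const_mul (I * k)).cexp.comp_ofReal
  refine (hp.fun_mul hE).congr_deriv ?_
  simp only [tanhExpDeriv, eval_add, eval_mul, eval_sub, eval_one, eval_pow, eval_X, eval_C,
    Function.comp_apply, id]
  push_cast
  ring

lemma deriv_deriv_eval_tanh_mul_exp (k : ℝ) (p : ℂ[X]) (x : ℝ) :
    deriv (deriv fun y : ℝ => p.eval (Real.tanh y : ℂ) * cexp (I * k * y)) x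
      = (tanhExpDeriv k (tanhExpDeriv k p)).eval (Real.tanh x : ℂ) * cexp (I * k * x) := by
  rw [funext fun y => (hasDerivAt_eval_tanh_mul_exp k p y).deriv]
  exact (hasDerivAt_eval_tanh_mul_exp k _ x).deriv

/-- Kaup's generalized eigenfunction: with
`Ψ₊(x,k) = [ (tanh x − ik)², −sech² x ]ᵀ e^{ikx}`, one has `H₀ Ψ₊ = (k²+1) Ψ₊`
componentwise, where
`H₀ = diag(−∂ₓ²+1, ∂ₓ²−1) + sech²x·[[−4,−2],[2,4]]`. -/
theorem stmt5 (k x : ℝ) :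
    let sech : ℝ → ℝ := fun y => 1 / Real.cosh y
    let ψ1 : ℝ → ℂ := fun y =>
      ((Real.tanh y : ℂ) - Complex.I * k)^2 * Complex.exp (Complex.I * k * y)
    let ψ2 : ℝ → ℂ := fun y =>
      -((sech y : ℂ))^2 * Complex.exp (Complex.I * k * y)
    (-(deriv (deriv ψ1) x) + ψ1 x - 4 * (sech x : ℂ)^2 * ψ1 x - 2 * (sech x : ℂ)^2 * ψ2 x
        = ((k:ℂ)^2 + 1) * ψ1 x) ∧
    (deriv (deriv ψ2) x - ψ2 x + 2 * (sech x : ℂ)^2 * ψ1 x + 4 * (sech x : ℂ)^2 * ψ2 x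
        = ((k:ℂ)^2 + 1) * ψ2 x) := by
  intro sech ψ1 ψ2
  have hsech : ∀ y, ((sech y : ℝ) : ℂ) ^ 2 = 1 - (Real.tanh y : ℂ) ^ 2 := fun y => by
    exact_mod_cast Real.one_div_cosh_sq y
  have hψ1 : ψ1 = fun y : ℝ => ((X - C (I * k)) ^ 2).eval (Real.tanh y : ℂ) * cexp (I * k * y) := by
    funext y; simp [ψ1]
  have hψ2 : ψ2 = fun y : ℝ => (-(1 - X ^ 2) : ℂ[X]).eval (Real.tanh y : ℂ) * cexp (I * k * y) := by
    funext y; simp [ψ2, hsech]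
  rw [hψ1, hψ2, deriv_deriv_eval_tanh_mul_exp, deriv_deriv_eval_tanh_mul_exp, hsech]
  simp only [tanhExpDeriv, derivative_mul, derivative_add, derivative_sub, derivative_neg,
    derivative_pow, derivative_X, derivative_C, derivative_one, derivative_zero, eval_zero,
    eval_add, eval_mul, eval_sub, eval_neg, eval_pow, eval_X, eval_C, eval_one]
  constructor <;> ring_nf <;> simp only [I_sq, I_pow_three, I_pow_four] <;> ring
end

section
/- For δ > 0, ∫₀^∞ e^{i s²/2} s²/(s²+δ²) ds = ∫₀^∞ e^{i s²/2} ds − δ ∫₀^∞ e^{i δ² s²/2} /(s²+1) ds, and consequently ∫₀^∞ e^{i s²/2} s²/(s²+δ²) ds = √(π/2) e^{iπ/4} + O(δ) as δ → 0+, where ∫₀^∞ e^{is²/2} ds = √(π/2) e^{iπ/4} is the Fresnel integral. -/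
/-!
For `0 ≤ re b`, `b ≠ 0`, one integration by parts bounds `∫ₐ^{a'} exp(-b x²) dx` by `1/(‖b‖ a)`,
so the partial integrals over `[0, R]` converge, with tails controlled uniformly in `b`.
For `b + ε` with `ε > 0` the integral converges absolutely to the Gaussian value
`(π/(b+ε))^{1/2}/2`; the uniform tail bound lets the limits `ε → 0+` and `R → ∞` be exchanged,
and `b = -i/2` gives the Fresnel integral. The splitting comes from
`s²/(s²+δ²) = 1 - δ²/(s²+δ²)` and the substitution `s = δu`, and since `|e^{iδ²u²/2}| = 1`
the remainder is bounded by `∫₀^∞ du/(u²+1) = π/2`.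
-/

open Filter intervalIntegral

open MeasureTheory Complex
open scoped Topology

section ComplexGaussian

variable {b : ℂ}

lemma norm_cexp_neg_mul_sq_le_one (hb : 0 ≤ b.re) (x : ℝ) : ‖cexp (-b * x ^ 2)‖ ≤ 1 := by
  rw [norm_cexp_neg_mul_sq, Real.exp_le_one_iff]
  nlinarith [sq_nonneg x]

lemma hasDerivAt_cexp_neg_mul_sq_div (hb : b ≠ 0) {x : ℝ} (hx : x ≠ 0) :
    HasDerivAt (fun x : ℝ => -cexp (-b * x ^ 2) / (2 * b * x))
      (cexp (-b * x ^ 2) + cexp (-b * x ^ 2) / (2 * b * x ^ 2)) x := by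
  have hx' : (x : ℂ) ≠ 0 := ofReal_ne_zero.2 hx
  have he : HasDerivAt (fun x : ℝ => cexp (-b * x ^ 2)) (cexp (-b * x ^ 2) * (-b * (2 * x))) x := by
    simpa using ((hasDerivAt_pow 2 (x : ℂ)).const_mul (-b)).cexp.comp_ofReal
  have hd : HasDerivAt (fun x : ℝ => 2 * b * (x : ℂ)) (2 * b) x := by
    simpa using (hasDerivAt_id (x : ℂ)).comp_ofReal.const_mul (2 * b)
  refine (he.neg.div hd (by simp [hb, hx'])).congr_deriv ?_
  simp only [Pi.neg_apply]
  field_simp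
  ring

lemma integral_cexp_neg_mul_sq_eq (hb : b ≠ 0) {a a' : ℝ} (ha : 0 < a) (ha' : 0 < a') :
    ∫ x in a..a', cexp (-b * x ^ 2) =
      cexp (-b * a ^ 2) / (2 * b * a) - cexp (-b * a' ^ 2) / (2 * b * a')
        - ∫ x in a..a', cexp (-b * x ^ 2) / (2 * b * x ^ 2) := by
  have hpos : ∀ x ∈ Set.uIcc a a', 0 < x := fun x hx => (lt_min ha ha').trans_le hx.1
  have hcont : ContinuousOn (fun x : ℝ => cexp (-b * x ^ 2) / (2 * b * x ^ 2)) (Set.uIcc a a') :=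
    ContinuousOn.div (by fun_prop) (by fun_prop) fun x hx => by simp [hb, (hpos x hx).ne']
  have hftc := integral_eq_sub_of_hasDerivAt
    (fun x hx => hasDerivAt_cexp_neg_mul_sq_div hb (hpos x hx).ne')
    ((Continuous.intervalIntegrable (by fun_prop) a a').add (hcont.intervalIntegrable))
  rw [integral_add (Continuous.intervalIntegrable (by fun_prop) a a') hcont.intervalIntegrable]
    at hftc
  rw [eq_sub_iff_add_eq, hftc]
  ring

lemma norm_cexp_neg_mul_sq_div_le (hb : 0 ≤ b.re) (x : ℝ) (w : ℂ) :
    ‖cexp (-b * x ^ 2) / w‖ ≤ ‖w‖⁻¹ := by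
  rw [norm_div, div_eq_mul_inv]
  exact mul_le_of_le_one_left (inv_nonneg.2 (norm_nonneg w)) (norm_cexp_neg_mul_sq_le_one hb x)

lemma integral_inv_sq_of_pos {a a' : ℝ} (ha : 0 < a) (ha' : 0 < a') :
    ∫ x in a..a', (x ^ 2)⁻¹ = a⁻¹ - a'⁻¹ := by
  have h0 : (0 : ℝ) ∉ Set.uIcc a a' := fun h => (lt_min ha ha').not_ge h.1
  have hzpow : ∀ x : ℝ, (x ^ 2)⁻¹ = x ^ (-2 : ℤ) := fun x => by rw [zpow_neg, zpow_two, sq]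
  simp_rw [hzpow]
  rw [integral_zpow (Or.inr ⟨by norm_num, h0⟩)]
  norm_num
  ring

lemma norm_integral_cexp_neg_mul_sq_le (hb : 0 ≤ b.re) (hb0 : b ≠ 0) {a a' : ℝ} (ha : 0 < a)
    (haa' : a ≤ a') : ‖∫ x in a..a', cexp (-b * x ^ 2)‖ ≤ 1 / (‖b‖ * a) := by
  have ha' : 0 < a' := ha.trans_le haa'
  have hboundary : ∀ x : ℝ, 0 < x → ‖cexp (-b * x ^ 2) / (2 * b * x)‖ ≤ (2 * ‖b‖ * x)⁻¹ :=
    fun x hx => by simpa [abs_of_pos hx] using norm_cexp_neg_mul_sq_div_le hb x (2 * b * x)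
  have hbulk :
      ‖∫ x in a..a', cexp (-b * x ^ 2) / (2 * b * x ^ 2)‖ ≤ (2 * ‖b‖)⁻¹ * (a⁻¹ - a'⁻¹) := by
    rw [← integral_inv_sq_of_pos ha ha', ← intervalIntegral.integral_const_mul]
    refine norm_integral_le_of_norm_le haa' (ae_of_all _ fun x _ => ?_)
      ((intervalIntegrable_inv (fun x hx => ?_) (by fun_prop)).const_mul _)
    · have h := norm_cexp_neg_mul_sq_div_le hb x (2 * b * x ^ 2)
      rwa [norm_mul, norm_mul, norm_pow, norm_real, Real.norm_eq_abs, sq_abs, RCLike.norm_ofNat,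
        mul_inv] at h
    · exact pow_ne_zero 2 ((lt_min ha ha').trans_le hx.1).ne'
  rw [integral_cexp_neg_mul_sq_eq hb0 ha ha']
  calc _ ≤ ‖cexp (-b * a ^ 2) / (2 * b * a)‖ + ‖cexp (-b * a' ^ 2) / (2 * b * a')‖
        + ‖∫ x in a..a', cexp (-b * x ^ 2) / (2 * b * x ^ 2)‖ :=
        norm_sub_le_of_le (norm_sub_le _ _) le_rfl
    _ ≤ (2 * ‖b‖ * a)⁻¹ + (2 * ‖b‖ * a')⁻¹ + (2 * ‖b‖)⁻¹ * (a⁻¹ - a'⁻¹) := by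
        gcongr
        exacts [hboundary a ha, hboundary a' ha']
    _ = 1 / (‖b‖ * a) := by field_simp; ring

lemma intervalIntegrable_cexp_neg_mul_sq (b : ℂ) (a a' : ℝ) :
    IntervalIntegrable (fun x : ℝ => cexp (-b * x ^ 2)) volume a a' :=
  (by fun_prop : Continuous fun x : ℝ => cexp (-b * x ^ 2)).intervalIntegrable a a'

lemma eventually_pos_and_one_div_norm_mul_lt (hb0 : b ≠ 0) {η : ℝ} (hη : 0 < η) :
    ∀ᶠ R in atTop, 0 < R ∧ 1 / (‖b‖ * R) < η := by
  have hlim : Tendsto (fun R : ℝ => 1 / (‖b‖ * R)) atTop (𝓝 0) := by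
    refine (tendsto_inv_atTop_zero.comp (tendsto_id.const_mul_atTop (norm_pos_iff.2 hb0))).congr
      fun R => ?_
    simp [one_div]
  exact (eventually_gt_atTop 0).and (hlim.eventually (gt_mem_nhds hη))

lemma cauchySeq_integral_cexp_neg_mul_sq (hb : 0 ≤ b.re) (hb0 : b ≠ 0) :
    CauchySeq fun R : ℝ => ∫ x in (0 : ℝ)..R, cexp (-b * x ^ 2) := by
  refine Metric.cauchySeq_iff'.2 fun η hη => ?_
  obtain ⟨N, hN, hNη⟩ := (eventually_pos_and_one_div_norm_mul_lt hb0 hη).exists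
  refine ⟨N, fun R hR => ?_⟩
  rw [dist_eq_norm, integral_interval_sub_left (intervalIntegrable_cexp_neg_mul_sq b 0 R)
    (intervalIntegrable_cexp_neg_mul_sq b 0 N)]
  exact (norm_integral_cexp_neg_mul_sq_le hb hb0 hN hR).trans_lt hNη

lemma norm_sub_integral_cexp_neg_mul_sq_le (hb : 0 ≤ b.re) (hb0 : b ≠ 0) {L : ℂ}
    (hL : Tendsto (fun R : ℝ => ∫ x in (0 : ℝ)..R, cexp (-b * x ^ 2)) atTop (𝓝 L))
    {R : ℝ} (hR : 0 < R) : ‖L - ∫ x in (0 : ℝ)..R, cexp (-b * x ^ 2)‖ ≤ 1 / (‖b‖ * R) := by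
  refine le_of_tendsto (hL.sub_const _).norm ?_
  filter_upwards [eventually_ge_atTop R] with R' hR'
  rw [integral_interval_sub_left (intervalIntegrable_cexp_neg_mul_sq b 0 R')
    (intervalIntegrable_cexp_neg_mul_sq b 0 R)]
  exact norm_integral_cexp_neg_mul_sq_le hb hb0 hR hR'

lemma norm_le_norm_add_ofReal (hb : 0 ≤ b.re) {ε : ℝ} (hε : 0 ≤ ε) : ‖b‖ ≤ ‖b + ε‖ := by
  rw [← sq_le_sq₀ (norm_nonneg _) (norm_nonneg _), Complex.sq_norm, Complex.sq_norm, normSq_apply,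
    normSq_apply]
  simp only [add_re, ofReal_re, add_im, ofReal_im, add_zero]
  nlinarith

lemma ofReal_div_mem_slitPlane (hb : 0 ≤ b.re) (hb0 : b ≠ 0) {r : ℝ} (hr : 0 < r) :
    (r : ℂ) / b ∈ slitPlane := by
  have hn : 0 < normSq b := normSq_pos.2 hb0
  rw [mem_slitPlane_iff, div_re, div_im]
  simp only [ofReal_re, ofReal_im, zero_mul, add_zero, zero_div, zero_sub, neg_ne_zero]
  rcases hb.lt_or_eq with hre | hre
  · exact Or.inl (by positivity)
  · refine Or.inr <| div_ne_zero (mul_ne_zero hr.ne' fun him => hb0 ?_) hn.ne'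
    exact Complex.ext hre.symm him

lemma norm_gaussian_sub_integral_cexp_neg_add_mul_sq_le (hb : 0 ≤ b.re) (hb0 : b ≠ 0) {ε : ℝ}
    (hε : 0 < ε) {R : ℝ} (hR : 0 < R) :
    ‖(Real.pi / (b + ε)) ^ (1 / 2 : ℂ) / 2 - ∫ x in (0 : ℝ)..R, cexp (-(b + ε) * x ^ 2)‖
      ≤ 1 / (‖b‖ * R) := by
  have hbε : 0 < (b + ε).re := by simp only [add_re, ofReal_re]; linarith
  have hbε0 : b + ε ≠ 0 := fun h => by simp [h] at hbε
  rw [← integral_gaussian_complex_Ioi hbε]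
  refine (norm_sub_integral_cexp_neg_mul_sq_le hbε.le hbε0 (intervalIntegral_tendsto_integral_Ioi 0
    (integrable_cexp_neg_mul_sq hbε).integrableOn tendsto_id) hR).trans ?_
  exact one_div_le_one_div_of_le (mul_pos (norm_pos_iff.2 hb0) hR)
    (mul_le_mul_of_nonneg_right (norm_le_norm_add_ofReal hb hε.le) hR.le)

lemma tendsto_cpow_pi_div_add_ofReal (hb : 0 ≤ b.re) (hb0 : b ≠ 0) :
    Tendsto (fun ε : ℝ => (Real.pi / (b + ε)) ^ (1 / 2 : ℂ) / 2) (𝓝 0)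
      (𝓝 ((Real.pi / b) ^ (1 / 2 : ℂ) / 2)) := by
  have hbase : Tendsto (fun ε : ℝ => (Real.pi : ℂ) / (b + ε)) (𝓝 0) (𝓝 (Real.pi / b)) := by
    have h := (tendsto_const_nhds (x := (Real.pi : ℂ))).div
      (tendsto_const_nhds.add (continuous_ofReal.tendsto 0)) (by simpa using hb0)
    rwa [ofReal_zero, add_zero] at h
  exact ((continuousAt_cpow_const (ofReal_div_mem_slitPlane hb hb0 Real.pi_pos)).tendsto.comp
    hbase).div_const 2

theorem tendsto_integral_cexp_neg_mul_sq (hb : 0 ≤ b.re) (hb0 : b ≠ 0) :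
    Tendsto (fun R : ℝ => ∫ x in (0 : ℝ)..R, cexp (-b * x ^ 2)) atTop
      (𝓝 ((Real.pi / b) ^ (1 / 2 : ℂ) / 2)) := by
  obtain ⟨L, hL⟩ := cauchySeq_tendsto_of_complete (cauchySeq_integral_cexp_neg_mul_sq hb hb0)
  have hunif :
      TendstoUniformlyOnFilter (fun R ε : ℝ => ∫ x in (0 : ℝ)..R, cexp (-(b + ε) * x ^ 2))
        (fun ε : ℝ => (Real.pi / (b + ε)) ^ (1 / 2 : ℂ) / 2) atTop (𝓝[>] 0) := by
    refine Metric.tendstoUniformlyOnFilter_iff.2 fun η hη => ?_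
    filter_upwards [(eventually_pos_and_one_div_norm_mul_lt hb0 hη).prod_mk self_mem_nhdsWithin]
      with ⟨R, ε⟩ ⟨⟨hR, hRη⟩, hε⟩
    rw [dist_eq_norm]
    exact (norm_gaussian_sub_integral_cexp_neg_add_mul_sq_le hb hb0 hε hR).trans_lt hRη
  have hcont : ∀ R : ℝ, Tendsto (fun ε : ℝ => ∫ x in (0 : ℝ)..R, cexp (-(b + ε) * x ^ 2))
      (𝓝[>] 0) (𝓝 (∫ x in (0 : ℝ)..R, cexp (-b * x ^ 2))) := fun R => by
    have h := (continuous_parametric_intervalIntegral_of_continuous' (μ := volume)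
      (f := fun (ε x : ℝ) => cexp (-(b + ε) * x ^ 2)) (by fun_prop) 0 R).tendsto 0
    simp only [ofReal_zero, add_zero] at h
    exact h.mono_left nhdsWithin_le_nhds
  have hregularized := hunif.tendsto_of_eventually_tendsto (Eventually.of_forall hcont) hL
  rwa [tendsto_nhds_unique hregularized
    ((tendsto_cpow_pi_div_add_ofReal hb hb0).mono_left nhdsWithin_le_nhds)] at hL

end ComplexGaussian

lemma cpow_one_half_pi_div_neg_I_div_two :
    ((Real.pi : ℂ) / -(I / 2)) ^ (1 / 2 : ℂ) / 2 =
      Real.sqrt (Real.pi / 2) * cexp (I * Real.pi / 4) := by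
  have hbase : (Real.pi : ℂ) / -(I / 2) = ((2 * Real.pi : ℝ) : ℂ) * I := by
    rw [div_eq_iff (by simp)]
    push_cast
    ring_nf
    simp [I_sq]
  have hsqrt : Real.sqrt (2 * Real.pi) = 2 * Real.sqrt (Real.pi / 2) := by
    rw [show 2 * Real.pi = 2 ^ 2 * (Real.pi / 2) by ring, Real.sqrt_mul (by positivity),
      Real.sqrt_sq zero_le_two]
  have hexp : cexp (Real.log (2 * Real.pi) * (1 / 2)) = Real.sqrt (2 * Real.pi) := by
    rw [Real.sqrt_eq_rpow, Real.rpow_def_of_pos (by positivity)]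
    push_cast
    rfl
  rw [hbase, cpow_def_of_ne_zero (by simp [Real.pi_ne_zero]),
    log_ofReal_mul (by positivity) I_ne_zero, log_I, add_mul, exp_add, hexp, hsqrt]
  push_cast
  ring_nf

theorem tendsto_integral_cexp_I_mul_sq_div_two :
    Tendsto (fun R : ℝ => ∫ s in (0 : ℝ)..R, cexp (I * s ^ 2 / 2)) atTop
      (𝓝 (Real.sqrt (Real.pi / 2) * cexp (I * Real.pi / 4))) := by
  have h := tendsto_integral_cexp_neg_mul_sq (b := -(I / 2)) (by simp) (by simp)
  rw [cpow_one_half_pi_div_neg_I_div_two] at h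
  refine h.congr fun R => integral_congr fun s _ => ?_
  ring_nf

lemma integral_mul_sq_div_sq_add_sq {g : ℝ → ℂ} (hg : Continuous g) {δ : ℝ} (hδ : 0 < δ)
    (R : ℝ) :
    ∫ s in (0 : ℝ)..R, g s * s ^ 2 / (s ^ 2 + δ ^ 2)
      = (∫ s in (0 : ℝ)..R, g s) - δ * ∫ u in (0 : ℝ)..R / δ, g (δ * u) / (u ^ 2 + 1) := by
  have hden : ∀ s : ℝ, (s : ℂ) ^ 2 + δ ^ 2 ≠ 0 := fun s => by
    exact_mod_cast (by positivity : (0 : ℝ) < s ^ 2 + δ ^ 2).ne'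
  have hδ' : (δ : ℂ) ≠ 0 := ofReal_ne_zero.2 hδ.ne'
  have hcont : Continuous fun s : ℝ => δ ^ 2 * g s / (s ^ 2 + δ ^ 2) :=
    (by fun_prop : Continuous fun s : ℝ => (δ : ℂ) ^ 2 * g s).div (by fun_prop) hden
  have hsubst : δ * ∫ u in (0 : ℝ)..R / δ, g (δ * u) / (u ^ 2 + 1)
      = ∫ s in (0 : ℝ)..R, δ ^ 2 * g s / (s ^ 2 + δ ^ 2) := by
    have h := integral_comp_mul_left (fun s : ℝ => δ ^ 2 * g s / (s ^ 2 + δ ^ 2)) hδ.ne'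
      (a := 0) (b := R / δ)
    rw [mul_zero, mul_div_cancel₀ R hδ.ne'] at h
    have hscale : ∀ u : ℝ,
        g (δ * u) / (u ^ 2 + 1) = δ ^ 2 * g (δ * u) / (((δ * u : ℝ) : ℂ) ^ 2 + δ ^ 2) := fun u => by
      have hu : (u : ℂ) ^ 2 + 1 ≠ 0 := by exact_mod_cast (by positivity : (0 : ℝ) < u ^ 2 + 1).ne'
      rw [div_eq_div_iff hu (hden _)]
      push_cast
      ring
    simp_rw [hscale, h, real_smul, ofReal_inv, mul_inv_cancel_left₀ hδ']
  rw [hsubst, ← integral_sub (hg.intervalIntegrable 0 R) (hcont.intervalIntegrable 0 R)]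
  refine integral_congr fun s _ => ?_
  field_simp [hden s]
  ring

lemma norm_div_sq_add_one_le {z : ℂ} (hz : ‖z‖ ≤ 1) (u : ℝ) :
    ‖z / (u ^ 2 + 1)‖ ≤ (1 + u ^ 2)⁻¹ := by
  have hpos : ‖((u : ℂ) ^ 2 + 1)‖ = 1 + u ^ 2 := by
    rw [← ofReal_pow, ← ofReal_one, ← ofReal_add, norm_real, Real.norm_of_nonneg (by positivity),
      add_comm]
  rw [norm_div, hpos, div_eq_mul_inv]
  exact mul_le_of_le_one_left (by positivity) hz

lemma integrableOn_Ioi_div_sq_add_one {g : ℝ → ℂ} (hg : Continuous g) (hg1 : ∀ u, ‖g u‖ ≤ 1) :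
    IntegrableOn (fun u : ℝ => g u / (u ^ 2 + 1)) (Set.Ioi 0) :=
  integrable_inv_one_add_sq.integrableOn.mono'
    (hg.div (by fun_prop) fun u => by
      exact_mod_cast (by positivity : (0 : ℝ) < u ^ 2 + 1).ne').aestronglyMeasurable
    (ae_of_all _ fun u => norm_div_sq_add_one_le (hg1 u) u)

lemma norm_integral_Ioi_div_sq_add_one_le {g : ℝ → ℂ} (hg1 : ∀ u, ‖g u‖ ≤ 1) :
    ‖∫ u in Set.Ioi (0 : ℝ), g u / (u ^ 2 + 1)‖ ≤ Real.pi / 2 := by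
  calc _ ≤ ∫ u in Set.Ioi (0 : ℝ), (1 + u ^ 2)⁻¹ :=
        norm_integral_le_of_norm_le integrable_inv_one_add_sq.integrableOn
          (ae_of_all _ fun u => norm_div_sq_add_one_le (hg1 u) u)
    _ = Real.pi / 2 := by rw [integral_Ioi_inv_one_add_sq, Real.arctan_zero, sub_zero]

/-- Fresnel-type integral splitting: for `δ > 0`,
`∫₀^∞ e^{is²/2} s²/(s²+δ²) ds = ∫₀^∞ e^{is²/2} ds − δ ∫₀^∞ e^{iδ²s²/2}/(s²+1) ds`,
the middle integral equals `√(π/2) e^{iπ/4}`, and the first equals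
`√(π/2) e^{iπ/4} + O(δ)` with explicit constant `π/2`. -/
theorem stmt13 (δ : ℝ) (hδ : 0 < δ) :
    ∃ L1 L2 L3 : ℂ,
      Tendsto (fun R : ℝ => ∫ s in (0:ℝ)..R,
          Complex.exp (Complex.I * (s:ℂ)^2 / 2) * (s:ℂ)^2 / ((s:ℂ)^2 + (δ:ℂ)^2))
        atTop (nhds L1) ∧
      Tendsto (fun R : ℝ => ∫ s in (0:ℝ)..R,
          Complex.exp (Complex.I * (s:ℂ)^2 / 2)) atTop (nhds L2) ∧
      Tendsto (fun R : ℝ => ∫ s in (0:ℝ)..R,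
          Complex.exp (Complex.I * (δ:ℂ)^2 * (s:ℂ)^2 / 2) / ((s:ℂ)^2 + 1))
        atTop (nhds L3) ∧
      L1 = L2 - δ * L3 ∧
      L2 = (Real.sqrt (Real.pi / 2) : ℂ) * Complex.exp (Complex.I * Real.pi / 4) ∧
      ‖L1 - (Real.sqrt (Real.pi / 2) : ℂ) * Complex.exp (Complex.I * Real.pi / 4)‖
        ≤ (Real.pi / 2) * δ := by
  have hunit : ∀ u : ℝ, ‖cexp (I * δ ^ 2 * u ^ 2 / 2)‖ ≤ 1 := fun u => by
    rw [show I * δ ^ 2 * u ^ 2 / 2 = ((δ ^ 2 * u ^ 2 / 2 : ℝ) : ℂ) * I by push_cast; ring,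
      norm_exp_ofReal_mul_I]
  have hL3 : Tendsto (fun R : ℝ => ∫ u in (0 : ℝ)..R, cexp (I * δ ^ 2 * u ^ 2 / 2) / (u ^ 2 + 1))
      atTop (𝓝 (∫ u in Set.Ioi (0 : ℝ), cexp (I * δ ^ 2 * u ^ 2 / 2) / (u ^ 2 + 1))) :=
    intervalIntegral_tendsto_integral_Ioi 0 (integrableOn_Ioi_div_sq_add_one (by fun_prop) hunit)
      tendsto_id
  have hsplit :=
    integral_mul_sq_div_sq_add_sq (g := fun s : ℝ => cexp (I * s ^ 2 / 2)) (by fun_prop) hδ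
  refine ⟨_, _, _, ?_, tendsto_integral_cexp_I_mul_sq_div_two, hL3, rfl, rfl, ?_⟩
  · refine (tendsto_integral_cexp_I_mul_sq_div_two.sub
      ((hL3.comp (tendsto_id.atTop_div_const hδ)).const_mul (δ : ℂ))).congr fun R => ?_
    rw [hsplit R, Function.comp_apply, id]
    congr 2
    refine integral_congr fun u _ => ?_
    push_cast
    ring_nf
  · rw [sub_sub_cancel_left, norm_neg, norm_mul, norm_real, Real.norm_of_nonneg hδ.le, mul_comm]
    gcongr
    exact norm_integral_Ioi_div_sq_add_one_le hunit
end

section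
/- Suppose h : ℝ → ℂ is C² with ‖h^{(ℓ)}‖_{L∞} ≤ C for ℓ = 0,1,2 on |k| ≥ 1 and |(k d/dk)^ℓ h(k)| ≤ C on |k| ≤ 1, and f : ℝ → ℂ is C² with bounded derivatives up to order 2. Then for all t ≥ 1, |∫₀^∞ e^{±itk²/2} h(k) f(k) dk| ≤ C' t^{−1/2} (‖f‖_∞ + ‖f'‖_∞ + ‖f''‖_∞), with C' depending only on C. -/
/-!
Split the integral at `δ = t^{-1/2}`. On `[0, δ]` the integrand is bounded by `‖h‖∞ ‖f‖∞`,
which contributes `O(δ)`. On `[δ, ∞)` write `e^{ck²/2} = (ck)⁻¹ ∂ₖ e^{ck²/2}` with `c = ±it`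
and integrate by parts twice. Each step gains a factor `(tk)⁻¹` and costs one derivative of
`g = h f`; the conormal bounds `|g^{(j)}(k)| ≲ 1 + k^{-j}` (from `(k ∂ₖ)^j h = O(1)` near `0`)
make the boundary terms at `δ` and the remaining absolutely convergent integral
`t⁻² ∫_δ^∞ O(k⁻² + k⁻⁴) dk` all `O(δ)`.
-/

open Filter

/-- The operator `f ↦ k f'`. -/
noncomputable def kD (f : ℝ → ℂ) : ℝ → ℂ := fun k => k * deriv f k

open MeasureTheory Set intervalIntegral Topology

section GaussPhase

variable {c : ℂ} {u u' u'' g : ℝ → ℂ} {x a b δ R : ℝ} {s : Set ℝ}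

noncomputable def gaussPhase (c : ℂ) (x : ℝ) : ℂ := Complex.exp (c * x ^ 2 / 2)

lemma continuous_gaussPhase (c : ℂ) : Continuous (gaussPhase c) := by
  unfold gaussPhase; fun_prop

lemma norm_gaussPhase_le_one (hc : c.re ≤ 0) (x : ℝ) : ‖gaussPhase c x‖ ≤ 1 := by
  rw [gaussPhase, Complex.norm_exp, Real.exp_le_one_iff, ← Complex.ofReal_pow]
  simp only [Complex.div_ofNat_re, Complex.mul_re, Complex.ofReal_re, Complex.ofReal_im, mul_zero,
    sub_zero]
  have := mul_nonpos_of_nonpos_of_nonneg hc (sq_nonneg x)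
  linarith

lemma hasDerivAt_ofReal (x : ℝ) : HasDerivAt (fun y : ℝ => (y : ℂ)) 1 x := by
  simpa using (hasDerivAt_id x).ofReal_comp

lemma hasDerivAt_gaussPhase (c : ℂ) (x : ℝ) :
    HasDerivAt (gaussPhase c) (c * x * gaussPhase c x) x := by
  have h := (((hasDerivAt_ofReal x).pow 2).const_mul c).div_const 2
  convert h.cexp using 1
  · funext y; simp [gaussPhase]
  · simp [gaussPhase]; ring

noncomputable def derivDivX (u u' : ℝ → ℂ) (x : ℝ) : ℂ := u' x / x - u x / x ^ 2

noncomputable def deriv2DivX (u u' u'' : ℝ → ℂ) (x : ℝ) : ℂ :=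
  u'' x / x - 2 * u' x / x ^ 2 + 2 * u x / x ^ 3

lemma hasDerivAt_derivDivX (hx : x ≠ 0)
    (hu : HasDerivAt u (u' x) x) (hu' : HasDerivAt u' (u'' x) x) :
    HasDerivAt (derivDivX u u') (deriv2DivX u u' u'' x) x := by
  have hx' : (x : ℂ) ≠ 0 := by exact_mod_cast hx
  have hid := hasDerivAt_ofReal x
  refine ((hu'.fun_div hid hx').sub (hu.fun_div (hid.fun_pow 2) (pow_ne_zero 2 hx'))).congr_deriv ?_
  simp only [deriv2DivX]
  field_simp
  ring

lemma continuousOn_derivDivX (hu : ContinuousOn u s)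
    (hu' : ContinuousOn u' s) (hs : (0 : ℝ) ∉ s) : ContinuousOn (derivDivX u u') s := by
  have h0 : ∀ x ∈ s, (x : ℂ) ≠ 0 := fun x hx => by exact_mod_cast ne_of_mem_of_not_mem hx hs
  unfold derivDivX
  exact (hu'.div (by fun_prop) h0).sub (hu.div (by fun_prop) fun x hx => pow_ne_zero 2 (h0 x hx))

lemma continuousOn_deriv2DivX (hu : ContinuousOn u s)
    (hu' : ContinuousOn u' s) (hu'' : ContinuousOn u'' s) (hs : (0 : ℝ) ∉ s) :
    ContinuousOn (deriv2DivX u u' u'') s := by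
  have h0 : ∀ x ∈ s, (x : ℂ) ≠ 0 := fun x hx => by exact_mod_cast ne_of_mem_of_not_mem hx hs
  unfold deriv2DivX
  exact ((hu''.div (by fun_prop) h0).sub ((hu'.const_smul (2 : ℂ)).div (by fun_prop)
    fun x hx => pow_ne_zero 2 (h0 x hx))).add ((hu.const_smul (2 : ℂ)).div (by fun_prop)
    fun x hx => pow_ne_zero 3 (h0 x hx))

lemma norm_ofReal_inv_of_pos (hx : 0 < x) : ‖(x : ℂ)⁻¹‖ = x⁻¹ := by
  rw [norm_inv, Complex.norm_real, Real.norm_of_nonneg hx.le]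

lemma norm_derivDivX_le (hx : 0 < x) :
    ‖derivDivX u u' x‖ ≤ ‖u' x‖ * x⁻¹ + ‖u x‖ * x⁻¹ ^ 2 := by
  unfold derivDivX
  refine (norm_sub_le _ _).trans_eq ?_
  simp only [div_eq_mul_inv, norm_mul, ← inv_pow, norm_pow, norm_ofReal_inv_of_pos hx]

lemma norm_deriv2DivX_le (hx : 0 < x) :
    ‖deriv2DivX u u' u'' x‖ ≤ ‖u'' x‖ * x⁻¹ + 2 * ‖u' x‖ * x⁻¹ ^ 2 + 2 * ‖u x‖ * x⁻¹ ^ 3 := by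
  unfold deriv2DivX
  refine (norm_add_le _ _).trans (add_le_add_left (norm_sub_le _ _) _) |>.trans_eq ?_
  simp only [div_eq_mul_inv, norm_mul, ← inv_pow, norm_pow, norm_ofReal_inv_of_pos hx]
  norm_num

lemma integral_mul_gaussPhase_eq (hc : c ≠ 0) (ha : 0 < a) (hab : a ≤ b)
    (hu : ∀ x ∈ Icc a b, HasDerivAt u (u' x) x)
    (hu' : ContinuousOn u' (Icc a b)) :
    ∫ x in a..b, u x * gaussPhase c x =
      u b / (c * b) * gaussPhase c b - u a / (c * a) * gaussPhase c a
        - c⁻¹ * ∫ x in a..b, derivDivX u u' x * gaussPhase c x := by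
  rw [← uIcc_of_le hab] at hu hu'
  have h0 : (0 : ℝ) ∉ uIcc a b := fun h => (ha.trans_le (uIcc_of_le hab ▸ h).1).false
  have hx0 : ∀ x ∈ uIcc a b, (x : ℂ) ≠ 0 := fun x hx => by
    exact_mod_cast ne_of_mem_of_not_mem hx h0
  have hquot : ∀ x ∈ uIcc a b,
      HasDerivAt (fun y => u y / (c * y)) (c⁻¹ * derivDivX u u' x) x := by
    intro x hx
    have hcx := (hasDerivAt_ofReal x).const_mul c
    refine ((hu x hx).fun_div hcx (mul_ne_zero hc (hx0 x hx))).congr_deriv ?_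
    simp only [derivDivX]
    field_simp
  have hcont : ContinuousOn (derivDivX u u') (uIcc a b) :=
    continuousOn_derivDivX (fun x hx => (hu x hx).continuousAt.continuousWithinAt) hu' h0
  have hcont' : Continuous fun x : ℝ => c * x * gaussPhase c x := by
    unfold gaussPhase; fun_prop
  have ibp := intervalIntegral.integral_mul_deriv_eq_deriv_mul hquot
    (fun x _ => hasDerivAt_gaussPhase c x) (hcont.const_smul c⁻¹).intervalIntegrable
    (hcont'.intervalIntegrable _ _)
  calc ∫ x in a..b, u x * gaussPhase c x
      = ∫ x in a..b, u x / (c * x) * (c * x * gaussPhase c x) :=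
        integral_congr fun x hx => by field_simp [hx0 x hx]
    _ = _ := by rw [ibp, ← intervalIntegral.integral_const_mul]; simp only [mul_assoc]

noncomputable def gaussPhaseBoundary (c : ℂ) (g : ℝ → ℂ) (x : ℝ) : ℂ :=
  g x / (c * x) * gaussPhase c x - c⁻¹ * (derivDivX g (deriv g) x / (c * x) * gaussPhase c x)

noncomputable def derivDivXTwice (g : ℝ → ℂ) : ℝ → ℂ :=
  derivDivX (derivDivX g (deriv g)) (deriv2DivX g (deriv g) (deriv (deriv g)))

lemma norm_div_mul_gaussPhase_le (hc : c.re ≤ 0) (hx : 0 < x) (z : ℂ) :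
    ‖z / (c * x) * gaussPhase c x‖ ≤ ‖z‖ * ‖c‖⁻¹ * x⁻¹ := by
  rw [norm_mul, norm_div, norm_mul, Complex.norm_real, Real.norm_of_nonneg hx.le, mul_assoc,
    ← mul_inv, ← div_eq_mul_inv]
  exact mul_le_of_le_one_right (by positivity) (norm_gaussPhase_le_one hc x)

lemma integral_mul_gaussPhase_eq_of_contDiff (hg : ContDiff ℝ 2 g) (hc : c ≠ 0) (hδ : 0 < δ)
    (hR : δ ≤ R) :
    ∫ x in δ..R, g x * gaussPhase c x = gaussPhaseBoundary c g R - gaussPhaseBoundary c g δ +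
      c⁻¹ ^ 2 * ∫ x in δ..R, derivDivXTwice g x * gaussPhase c x := by
  have h0 : (0 : ℝ) ∉ Icc δ R := fun h => hδ.not_ge h.1
  have hd := hg.differentiable two_ne_zero
  have hd' := hg.differentiable_deriv_two
  rw [integral_mul_gaussPhase_eq hc hδ hR (fun x _ => (hd x).hasDerivAt)
      (hg.continuous_deriv one_le_two).continuousOn,
    integral_mul_gaussPhase_eq hc hδ hR
      (fun x hx => hasDerivAt_derivDivX (ne_of_mem_of_not_mem hx h0) (hd x).hasDerivAt
        (hd' x).hasDerivAt)
      (continuousOn_deriv2DivX hd.continuous.continuousOn hd'.continuous.continuousOn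
        ((hg.deriv' (n := 1)).continuous_deriv le_rfl).continuousOn h0)]
  simp only [gaussPhaseBoundary, derivDivXTwice]
  ring

end GaussPhase

section InvPow

variable {m : ℕ} {δ : ℝ}

lemma rpow_neg_natCast_eq_inv_pow {x : ℝ} (hx : 0 < x) (n : ℕ) : x ^ (-(n : ℝ)) = x⁻¹ ^ n := by
  rw [Real.rpow_neg hx.le, Real.rpow_natCast, inv_pow]

lemma integrableOn_Ioi_inv_pow_succ (hm : 1 ≤ m) (hδ : 0 < δ) :
    IntegrableOn (fun x : ℝ => x⁻¹ ^ (m + 1)) (Ioi δ) := by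
  refine (integrableOn_Ioi_rpow_of_lt (a := -((m + 1 : ℕ) : ℝ)) ?_ hδ).congr_fun
    (fun x hx => rpow_neg_natCast_eq_inv_pow (hδ.trans hx) _) measurableSet_Ioi
  push_cast
  have : (1 : ℝ) ≤ m := by exact_mod_cast hm
  linarith

lemma integral_Ioi_inv_pow_succ (hm : 1 ≤ m) (hδ : 0 < δ) :
    ∫ x in Ioi δ, x⁻¹ ^ (m + 1) = δ⁻¹ ^ m / m := by
  have hm' : (1 : ℝ) ≤ m := by exact_mod_cast hm
  rw [← setIntegral_congr_fun measurableSet_Ioi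
    (fun x hx => rpow_neg_natCast_eq_inv_pow (hδ.trans hx) (m + 1)),
    integral_Ioi_rpow_of_lt (by push_cast; linarith) hδ]
  have : -((m + 1 : ℕ) : ℝ) + 1 = -(m : ℝ) := by push_cast; ring
  rw [this, rpow_neg_natCast_eq_inv_pow hδ, neg_div_neg_eq]

end InvPow

structure ConormalBound (A : ℝ) (g : ℝ → ℂ) : Prop where
  norm_le : ∀ x, 0 < x → ‖g x‖ ≤ A
  norm_deriv_le : ∀ x, 0 < x → ‖deriv g x‖ ≤ A * (1 + x⁻¹)
  norm_deriv_deriv_le : ∀ x, 0 < x → ‖deriv (deriv g) x‖ ≤ A * (1 + x⁻¹ ^ 2)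

lemma deriv_deriv_fun_mul {h f : ℝ → ℂ} (hh : ContDiff ℝ 2 h) (hf : ContDiff ℝ 2 f) (x : ℝ) :
    deriv (deriv (fun x => h x * f x)) x =
      deriv (deriv h) x * f x + deriv h x * deriv f x +
        (deriv h x * deriv f x + h x * deriv (deriv f) x) := by
  have hd := hh.differentiable two_ne_zero
  have hd' := hh.differentiable_deriv_two
  have fd := hf.differentiable two_ne_zero
  have fd' := hf.differentiable_deriv_two
  have hderiv : deriv (fun x => h x * f x) = fun x => deriv h x * f x + h x * deriv f x :=
    funext fun x => deriv_fun_mul (hd x) (fd x)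
  rw [hderiv]
  exact (((hd' x).hasDerivAt.mul (fd x).hasDerivAt).add
    ((hd x).hasDerivAt.mul (fd' x).hasDerivAt)).deriv

section kD

variable {h : ℝ → ℂ} {x C : ℝ}

lemma norm_kD_of_pos (hx : 0 < x) : ‖kD h x‖ = x * ‖deriv h x‖ := by
  rw [kD, norm_mul, Complex.norm_real, Real.norm_of_nonneg hx.le]

lemma kD_kD_apply (hd : DifferentiableAt ℝ (deriv h) x) :
    kD (kD h) x = x * deriv h x + x ^ 2 * deriv (deriv h) x := by
  have : HasDerivAt (kD h) (1 * deriv h x + x * deriv (deriv h) x) x :=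
    (hasDerivAt_ofReal x).mul hd.hasDerivAt
  rw [kD, this.deriv]
  ring

lemma norm_deriv_le_of_norm_kD_le (hx : 0 < x) (h1 : ‖kD h x‖ ≤ C) :
    ‖deriv h x‖ ≤ C * x⁻¹ := by
  rw [norm_kD_of_pos hx] at h1
  rw [← div_eq_mul_inv, le_div_iff₀ hx]
  linarith

lemma norm_deriv_deriv_le_of_norm_kD_le (hx : 0 < x) (hd : DifferentiableAt ℝ (deriv h) x)
    (h1 : ‖kD h x‖ ≤ C) (h2 : ‖kD (kD h) x‖ ≤ C) : ‖deriv (deriv h) x‖ ≤ 2 * C * x⁻¹ ^ 2 := by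
  have hsq : x ^ 2 * ‖deriv (deriv h) x‖ = ‖kD (kD h) x - kD h x‖ := by
    rw [kD_kD_apply hd, kD, add_sub_cancel_left, norm_mul, ← Complex.ofReal_pow,
      Complex.norm_real, Real.norm_of_nonneg (by positivity)]
  have : x ^ 2 * ‖deriv (deriv h) x‖ ≤ 2 * C := hsq ▸ (norm_sub_le _ _).trans (by linarith)
  rw [inv_pow, ← div_eq_mul_inv, le_div_iff₀ (by positivity)]
  linarith

end kD

namespace ConormalBound

variable {A B : ℝ} {g h f : ℝ → ℂ} {c : ℂ} {x δ : ℝ}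

lemma nonneg (hg : ConormalBound A g) : 0 ≤ A :=
  (norm_nonneg _).trans (hg.norm_le 1 one_pos)

lemma of_norm_le {M0 M1 M2 : ℝ} (hM0 : ∀ x, ‖f x‖ ≤ M0) (hM1 : ∀ x, ‖deriv f x‖ ≤ M1)
    (hM2 : ∀ x, ‖deriv (deriv f) x‖ ≤ M2) : ConormalBound (M0 + M1 + M2) f := by
  have h0 : 0 ≤ M0 := (norm_nonneg _).trans (hM0 0)
  have h1 : 0 ≤ M1 := (norm_nonneg _).trans (hM1 0)
  have h2 : 0 ≤ M2 := (norm_nonneg _).trans (hM2 0)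
  refine ⟨fun x _ => ?_, fun x hx => ?_, fun x hx => ?_⟩
  · linarith [hM0 x]
  · have := mul_nonneg (add_nonneg (add_nonneg h0 h1) h2) (inv_pos.2 hx).le
    nlinarith [hM1 x]
  · have := mul_nonneg (add_nonneg (add_nonneg h0 h1) h2) (pow_nonneg (inv_pos.2 hx).le 2)
    nlinarith [hM2 x]

lemma mul (hh : ConormalBound A h) (hf : ConormalBound B f) (hh2 : ContDiff ℝ 2 h)
    (hf2 : ContDiff ℝ 2 f) : ConormalBound (6 * A * B) (fun x => h x * f x) := by
  have hAB := mul_nonneg hh.nonneg hf.nonneg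
  refine ⟨fun x hx => ?_, fun x hx => ?_, fun x hx => ?_⟩
  · calc ‖h x * f x‖ ≤ A * B := norm_mul_le_of_le (hh.norm_le x hx) (hf.norm_le x hx)
      _ ≤ 6 * A * B := by linarith
  · set y := x⁻¹
    have hy : 0 ≤ y := (inv_pos.2 hx).le
    rw [deriv_fun_mul (hh2.differentiable two_ne_zero x) (hf2.differentiable two_ne_zero x)]
    calc ‖deriv h x * f x + h x * deriv f x‖
        ≤ A * (1 + y) * B + A * (B * (1 + y)) :=
          (norm_add_le _ _).trans (add_le_add
            (norm_mul_le_of_le (hh.norm_deriv_le x hx) (hf.norm_le x hx))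
            (norm_mul_le_of_le (hh.norm_le x hx) (hf.norm_deriv_le x hx)))
      _ ≤ 6 * A * B * (1 + y) := by nlinarith [mul_nonneg hAB hy]
  · set y := x⁻¹
    have hy : 0 ≤ y := (inv_pos.2 hx).le
    rw [deriv_deriv_fun_mul hh2 hf2]
    calc _ ≤ A * (1 + y ^ 2) * B + A * (1 + y) * (B * (1 + y)) +
          (A * (1 + y) * (B * (1 + y)) + A * (B * (1 + y ^ 2))) :=
          (norm_add_le _ _).trans (add_le_add ((norm_add_le _ _).trans (add_le_add
            (norm_mul_le_of_le (hh.norm_deriv_deriv_le x hx) (hf.norm_le x hx))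
            (norm_mul_le_of_le (hh.norm_deriv_le x hx) (hf.norm_deriv_le x hx))))
            ((norm_add_le _ _).trans (add_le_add
            (norm_mul_le_of_le (hh.norm_deriv_le x hx) (hf.norm_deriv_le x hx))
            (norm_mul_le_of_le (hh.norm_le x hx) (hf.norm_deriv_deriv_le x hx)))))
      _ ≤ 6 * A * B * (1 + y ^ 2) := by nlinarith [mul_nonneg hAB (sq_nonneg (y - 1))]

lemma of_kD {C : ℝ} (hh : ContDiff ℝ 2 h)
    (hout : ∀ ℓ : ℕ, ℓ ≤ 2 → ∀ k : ℝ, 1 ≤ |k| → ‖iteratedDeriv ℓ h k‖ ≤ C)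
    (hin : ∀ ℓ : ℕ, ℓ ≤ 2 → ∀ k : ℝ, |k| ≤ 1 → ‖(kD^[ℓ] h) k‖ ≤ C) :
    ConormalBound (2 * C) h := by
  have hC : 0 ≤ C := (norm_nonneg _).trans (hout 0 (by norm_num) 1 (by norm_num))
  have hout' : ∀ x, 1 ≤ x → ‖h x‖ ≤ C ∧ ‖deriv h x‖ ≤ C ∧ ‖deriv (deriv h) x‖ ≤ C :=
    fun x hx => by
      have hk : 1 ≤ |x| := hx.trans (le_abs_self x)
      exact ⟨by simpa using hout 0 (by norm_num) x hk, by simpa using hout 1 (by norm_num) x hk,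
        by simpa [iteratedDeriv_succ] using hout 2 le_rfl x hk⟩
  have hin' : ∀ x, 0 < x → x ≤ 1 → ‖h x‖ ≤ C ∧ ‖kD h x‖ ≤ C ∧ ‖kD (kD h) x‖ ≤ C :=
    fun x hx hx1 => by
      have hk : |x| ≤ 1 := by rwa [abs_of_pos hx]
      exact ⟨hin 0 (by norm_num) x hk, hin 1 (by norm_num) x hk, hin 2 le_rfl x hk⟩
  refine ⟨fun x hx => ?_, fun x hx => ?_, fun x hx => ?_⟩ <;>
    have hy : 0 ≤ x⁻¹ := (inv_pos.2 hx).le <;> rcases le_total x 1 with hx1 | hx1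
  · linarith [(hin' x hx hx1).1]
  · linarith [(hout' x hx1).1]
  · have := norm_deriv_le_of_norm_kD_le hx (hin' x hx hx1).2.1
    nlinarith
  · nlinarith [(hout' x hx1).2.1]
  · have := norm_deriv_deriv_le_of_norm_kD_le hx (hh.differentiable_deriv_two x)
      (hin' x hx hx1).2.1 (hin' x hx hx1).2.2
    nlinarith [sq_nonneg x⁻¹]
  · nlinarith [(hout' x hx1).2.2, sq_nonneg x⁻¹]

lemma norm_derivDivX_le (hg : ConormalBound A g) (hx : 0 < x) :
    ‖derivDivX g (deriv g) x‖ ≤ A * (x⁻¹ + 2 * x⁻¹ ^ 2) := by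
  have hy : 0 ≤ x⁻¹ := (inv_pos.2 hx).le
  calc _ ≤ ‖deriv g x‖ * x⁻¹ + ‖g x‖ * x⁻¹ ^ 2 := _root_.norm_derivDivX_le hx
    _ ≤ A * (1 + x⁻¹) * x⁻¹ + A * x⁻¹ ^ 2 := by
      gcongr
      exacts [hg.norm_deriv_le x hx, hg.norm_le x hx]
    _ = A * (x⁻¹ + 2 * x⁻¹ ^ 2) := by ring

lemma norm_deriv2DivX_le (hg : ConormalBound A g) (hx : 0 < x) :
    ‖deriv2DivX g (deriv g) (deriv (deriv g)) x‖ ≤ A * (x⁻¹ + 2 * x⁻¹ ^ 2 + 5 * x⁻¹ ^ 3) := by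
  have hy : 0 ≤ x⁻¹ := (inv_pos.2 hx).le
  calc _ ≤ ‖deriv (deriv g) x‖ * x⁻¹ + 2 * ‖deriv g x‖ * x⁻¹ ^ 2 + 2 * ‖g x‖ * x⁻¹ ^ 3 :=
        _root_.norm_deriv2DivX_le hx
    _ ≤ A * (1 + x⁻¹ ^ 2) * x⁻¹ + 2 * (A * (1 + x⁻¹)) * x⁻¹ ^ 2 + 2 * A * x⁻¹ ^ 3 := by
      gcongr
      exacts [hg.norm_deriv_deriv_le x hx, hg.norm_deriv_le x hx, hg.norm_le x hx]
    _ = A * (x⁻¹ + 2 * x⁻¹ ^ 2 + 5 * x⁻¹ ^ 3) := by ring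

lemma norm_derivDivXTwice_le (hg : ConormalBound A g) (hx : 0 < x) :
    ‖derivDivXTwice g x‖ ≤ 9 * A * (x⁻¹ ^ 2 + x⁻¹ ^ 4) := by
  have hy : 0 ≤ x⁻¹ := (inv_pos.2 hx).le
  have hA := hg.nonneg
  calc _ ≤ _ := _root_.norm_derivDivX_le hx
    _ ≤ A * (x⁻¹ + 2 * x⁻¹ ^ 2 + 5 * x⁻¹ ^ 3) * x⁻¹ + A * (x⁻¹ + 2 * x⁻¹ ^ 2) * x⁻¹ ^ 2 := by
      gcongr
      exacts [hg.norm_deriv2DivX_le hx, hg.norm_derivDivX_le hx]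
    _ ≤ 9 * A * (x⁻¹ ^ 2 + x⁻¹ ^ 4) := by
      -- with `y = x⁻¹`: `9 (y² + y⁴) - (y² + 3y³ + 7y⁴) = y² (2 (y - 3/4)² + 55/8)`
      nlinarith [mul_nonneg (mul_nonneg hA (sq_nonneg x⁻¹)) (sq_nonneg (x⁻¹ - 3 / 4)),
        mul_nonneg hA (sq_nonneg x⁻¹)]

lemma norm_gaussPhaseBoundary_le (hg : ConormalBound A g) (hc : c.re ≤ 0) (hx : 0 < x) :
    ‖gaussPhaseBoundary c g x‖ ≤ A * (‖c‖⁻¹ * x⁻¹ + ‖c‖⁻¹ ^ 2 * (x⁻¹ ^ 2 + 2 * x⁻¹ ^ 3)) := by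
  have hy : 0 ≤ x⁻¹ := (inv_pos.2 hx).le
  calc _ ≤ ‖g x‖ * ‖c‖⁻¹ * x⁻¹ + ‖c‖⁻¹ * (‖derivDivX g (deriv g) x‖ * ‖c‖⁻¹ * x⁻¹) := by
        refine (norm_sub_le _ _).trans (add_le_add (norm_div_mul_gaussPhase_le hc hx _) ?_)
        rw [norm_mul, norm_inv]
        gcongr
        exact norm_div_mul_gaussPhase_le hc hx _
    _ ≤ A * ‖c‖⁻¹ * x⁻¹ + ‖c‖⁻¹ * (A * (x⁻¹ + 2 * x⁻¹ ^ 2) * ‖c‖⁻¹ * x⁻¹) := by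
      gcongr
      exacts [hg.norm_le x hx, hg.norm_derivDivX_le hx]
    _ = A * (‖c‖⁻¹ * x⁻¹ + ‖c‖⁻¹ ^ 2 * (x⁻¹ ^ 2 + 2 * x⁻¹ ^ 3)) := by ring

lemma norm_derivDivXTwice_mul_gaussPhase_le (hg : ConormalBound A g) (hc : c.re ≤ 0)
    (hx : 0 < x) : ‖derivDivXTwice g x * gaussPhase c x‖ ≤ 9 * A * (x⁻¹ ^ 2 + x⁻¹ ^ 4) :=
  (norm_mul_le_of_le (hg.norm_derivDivXTwice_le hx) (norm_gaussPhase_le_one hc x)).trans_eq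
    (mul_one _)

lemma integrableOn_derivDivXTwice_mul_gaussPhase (hg : ConormalBound A g)
    (hg2 : ContDiff ℝ 2 g) (hc : c.re ≤ 0) (hδ : 0 < δ) :
    IntegrableOn (fun x => derivDivXTwice g x * gaussPhase c x) (Ioi δ) := by
  have h0 : (0 : ℝ) ∉ Ioi δ := fun h => hδ.not_gt h
  have hd := hg2.differentiable two_ne_zero
  have hd' := hg2.differentiable_deriv_two
  have hcont : ContinuousOn (derivDivXTwice g) (Ioi δ) :=
    continuousOn_derivDivX
      (continuousOn_derivDivX hd.continuous.continuousOn hd'.continuous.continuousOn h0)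
      (continuousOn_deriv2DivX hd.continuous.continuousOn hd'.continuous.continuousOn
        ((hg2.deriv' (n := 1)).continuous_deriv le_rfl).continuousOn h0) h0
  refine (((integrableOn_Ioi_inv_pow_succ le_rfl hδ).add
    (integrableOn_Ioi_inv_pow_succ (m := 3) (by norm_num) hδ)).const_mul (9 * A)).mono'
    ((hcont.mul (continuous_gaussPhase c).continuousOn).aestronglyMeasurable measurableSet_Ioi)
    ((ae_restrict_iff' measurableSet_Ioi).mpr (ae_of_all _ fun x hx =>
      hg.norm_derivDivXTwice_mul_gaussPhase_le hc (hδ.trans hx)))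

lemma norm_integral_derivDivXTwice_mul_gaussPhase_le (hg : ConormalBound A g) (hc : c.re ≤ 0)
    (hδ : 0 < δ) (hδ1 : δ ≤ 1) :
    ‖∫ x in Ioi δ, derivDivXTwice g x * gaussPhase c x‖ ≤ 12 * A * δ⁻¹ ^ 3 := by
  have h2 := integrableOn_Ioi_inv_pow_succ le_rfl hδ
  have h4 := integrableOn_Ioi_inv_pow_succ (m := 3) (by norm_num) hδ
  have hδ' : 1 ≤ δ⁻¹ := one_le_inv_iff₀.2 ⟨hδ, hδ1⟩
  calc _ ≤ ∫ x in Ioi δ, 9 * A * (x⁻¹ ^ 2 + x⁻¹ ^ 4) :=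
        norm_integral_le_of_norm_le ((h2.add h4).const_mul _)
          ((ae_restrict_iff' measurableSet_Ioi).mpr (ae_of_all _ fun x hx =>
            hg.norm_derivDivXTwice_mul_gaussPhase_le hc (hδ.trans hx)))
    _ = 9 * A * (δ⁻¹ + δ⁻¹ ^ 3 / 3) := by
      rw [MeasureTheory.integral_const_mul, integral_add h2 h4, integral_Ioi_inv_pow_succ le_rfl hδ,
        integral_Ioi_inv_pow_succ (m := 3) (by norm_num) hδ]
      norm_num
    _ ≤ 12 * A * δ⁻¹ ^ 3 := by
      nlinarith [hg.nonneg, mul_nonneg hg.nonneg (sub_nonneg.2 (le_self_pow₀ hδ' three_ne_zero))]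

lemma exists_tendsto_integral_mul_gaussPhase_of_pos (hg : ConormalBound A g)
    (hg2 : ContDiff ℝ 2 g) (hc : c.re ≤ 0) (hc0 : c ≠ 0) (hδ : 0 < δ) (hδ1 : δ ≤ 1) :
    ∃ J, Tendsto (fun R => ∫ x in δ..R, g x * gaussPhase c x) atTop (𝓝 J) ∧
      ‖J‖ ≤ A * (‖c‖⁻¹ * δ⁻¹ + 15 * ‖c‖⁻¹ ^ 2 * δ⁻¹ ^ 3) := by
  set B := gaussPhaseBoundary c g
  set J := ∫ x in Ioi δ, derivDivXTwice g x * gaussPhase c x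
  have hB : Tendsto B atTop (𝓝 0) := by
    refine squeeze_zero_norm' ((eventually_gt_atTop 0).mono fun x hx =>
      hg.norm_gaussPhaseBoundary_le hc hx) ?_
    have : Continuous fun y : ℝ => A * (‖c‖⁻¹ * y + ‖c‖⁻¹ ^ 2 * (y ^ 2 + 2 * y ^ 3)) := by
      fun_prop
    exact (this.tendsto' 0 0 (by simp)).comp tendsto_inv_atTop_zero
  refine ⟨-B δ + c⁻¹ ^ 2 * J, ?_, ?_⟩
  · have hlim := (hB.sub_const (B δ)).add ((intervalIntegral_tendsto_integral_Ioi δ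
      (hg.integrableOn_derivDivXTwice_mul_gaussPhase hg2 hc hδ) tendsto_id).const_mul (c⁻¹ ^ 2))
    rw [zero_sub] at hlim
    exact hlim.congr' ((eventually_ge_atTop δ).mono fun R hR =>
      (integral_mul_gaussPhase_eq_of_contDiff hg2 hc0 hδ hR).symm)
  · have hδ' : 1 ≤ δ⁻¹ := one_le_inv_iff₀.2 ⟨hδ, hδ1⟩
    calc ‖-B δ + c⁻¹ ^ 2 * J‖ ≤ ‖B δ‖ + ‖c‖⁻¹ ^ 2 * ‖J‖ := by
          rw [← norm_neg (B δ), ← norm_inv, ← norm_pow, ← norm_mul]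
          exact norm_add_le _ _
      _ ≤ A * (‖c‖⁻¹ * δ⁻¹ + ‖c‖⁻¹ ^ 2 * (δ⁻¹ ^ 2 + 2 * δ⁻¹ ^ 3)) +
          ‖c‖⁻¹ ^ 2 * (12 * A * δ⁻¹ ^ 3) := by
        gcongr
        exacts [hg.norm_gaussPhaseBoundary_le hc hδ,
          hg.norm_integral_derivDivXTwice_mul_gaussPhase_le hc hδ hδ1]
      _ ≤ A * (‖c‖⁻¹ * δ⁻¹ + 15 * ‖c‖⁻¹ ^ 2 * δ⁻¹ ^ 3) := by
        nlinarith [mul_nonneg (mul_nonneg hg.nonneg (sq_nonneg ‖c‖⁻¹))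
          (sub_nonneg.2 (pow_le_pow_right₀ hδ' (show 2 ≤ 3 by norm_num)))]

lemma exists_tendsto_integral_mul_gaussPhase
    (hg : ConormalBound A g) (hg2 : ContDiff ℝ 2 g) (hc : c.re ≤ 0) (hc1 : 1 ≤ ‖c‖) :
    ∃ L, Tendsto (fun R => ∫ x in (0 : ℝ)..R, g x * gaussPhase c x) atTop (𝓝 L) ∧
      ‖L‖ ≤ 17 * A * ‖c‖ ^ (-(1 : ℝ) / 2) := by
  set δ := ‖c‖ ^ (-(1 : ℝ) / 2) with hδ_def
  have hc0 : c ≠ 0 := norm_pos_iff.1 (one_pos.trans_le hc1)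
  have hδ : 0 < δ := Real.rpow_pos_of_pos (one_pos.trans_le hc1) _
  have hδ1 : δ ≤ 1 := Real.rpow_le_one_of_one_le_of_nonpos hc1 (by norm_num)
  have hcδ : ‖c‖⁻¹ = δ ^ 2 := by
    rw [hδ_def, ← Real.rpow_mul_natCast (norm_nonneg _), ← Real.rpow_neg_one]
    norm_num
  obtain ⟨J, hJ, hJle⟩ := hg.exists_tendsto_integral_mul_gaussPhase_of_pos hg2 hc hc0 hδ hδ1
  have hint : ∀ a b, IntervalIntegrable (fun x => g x * gaussPhase c x) volume a b :=
    (hg2.continuous.mul (continuous_gaussPhase c)).intervalIntegrable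
  have hI : ‖∫ x in (0 : ℝ)..δ, g x * gaussPhase c x‖ ≤ A * δ := by
    have := norm_integral_le_of_norm_le_const fun x hx =>
      (norm_mul_le_of_le (hg.norm_le x (uIoc_of_le hδ.le ▸ hx).1)
        (norm_gaussPhase_le_one hc x)).trans_eq (mul_one A)
    rwa [sub_zero, abs_of_pos hδ] at this
  refine ⟨(∫ x in (0 : ℝ)..δ, g x * gaussPhase c x) + J, (tendsto_const_nhds.add hJ).congr
    fun R => integral_add_adjacent_intervals (hint 0 δ) (hint δ R), ?_⟩
  calc _ ≤ A * δ + A * (δ ^ 2 * δ⁻¹ + 15 * (δ ^ 2) ^ 2 * δ⁻¹ ^ 3) :=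
        (norm_add_le _ _).trans (add_le_add hI (hcδ ▸ hJle))
    _ = 17 * A * δ := by field_simp; ring

end ConormalBound

/-- Stationary phase bound: if `h` is conormal with constant `C` (up to order 2)
and `f` is `C²` with bounded derivatives, then for `t ≥ 1`,
`|∫₀^∞ e^{±itk²/2} h(k) f(k) dk| ≤ C' t^{−1/2}(‖f‖_∞+‖f'‖_∞+‖f''‖_∞)`
with `C'` depending only on `C`. -/
theorem stmt15 (C : ℝ) (hC : 0 ≤ C) :
    ∃ C' : ℝ, 0 < C' ∧ ∀ (h f : ℝ → ℂ) (M0 M1 M2 : ℝ),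
      ContDiff ℝ 2 h →
      (∀ ℓ : ℕ, ℓ ≤ 2 → ∀ k : ℝ, 1 ≤ |k| → ‖iteratedDeriv ℓ h k‖ ≤ C) →
      (∀ ℓ : ℕ, ℓ ≤ 2 → ∀ k : ℝ, |k| ≤ 1 → ‖(kD^[ℓ] h) k‖ ≤ C) →
      ContDiff ℝ 2 f →
      (∀ k, ‖f k‖ ≤ M0) → (∀ k, ‖deriv f k‖ ≤ M1) → (∀ k, ‖deriv (deriv f) k‖ ≤ M2) →
      ∀ t : ℝ, 1 ≤ t → ∀ ε : ℝ, ε = 1 ∨ ε = -1 →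
        ∃ L : ℂ,
          Tendsto (fun R : ℝ => ∫ k in (0:ℝ)..R,
              Complex.exp ((ε : ℂ) * Complex.I * t * (k:ℂ)^2 / 2) * h k * f k)
            atTop (nhds L) ∧
          ‖L‖ ≤ C' * t ^ (-(1:ℝ)/2) * (M0 + M1 + M2) := by
  refine ⟨204 * (C + 1), by positivity, ?_⟩
  intro h f M0 M1 M2 hh hout hin hf hM0 hM1 hM2 t ht ε hε
  have hfM := ConormalBound.of_norm_le hM0 hM1 hM2
  have hg := (ConormalBound.of_kD hh hout hin).mul hfM hh hf
  set c : ℂ := ε * Complex.I * t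
  have hc_re : c.re = 0 := by simp [c]
  have hc_norm : ‖c‖ = t := by
    rcases hε with rfl | rfl <;> simp [c, abs_of_pos (one_pos.trans_le ht)]
  obtain ⟨L, hL, hLle⟩ :=
    hg.exists_tendsto_integral_mul_gaussPhase (hh.mul hf) hc_re.le (hc_norm ▸ ht)
  refine ⟨L, hL.congr fun R => integral_congr fun x _ => ?_, ?_⟩
  · simp only [gaussPhase, c]
    ring
  · rw [hc_norm] at hLle
    have := mul_nonneg hfM.nonneg (Real.rpow_nonneg (zero_le_one.trans ht) (-(1 : ℝ) / 2))
    nlinarith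
end
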